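/- arXiv:math/0006020 — 3 statements merged into one kernel-verified Lean document; each statement's English description precedes it below -/
import Mathlib

section
/- Let (A, ρ, s) be a minimal quantum algebra over a field k. If (A, ρ, t_d, t_u) is an oriented quantum algebra over k, then t_d ∘ t_u = s⁻². -/
open TensorProduct

noncomputable section

variable (k : Type*) [Field k] (A : Type*) [Ring A] [Algebra k A]

/-- The linear map `A ⊗ A → A ⊗ Aᵐᵒᵖ` used to interpret elements in `A ⊗ Aᵒᵖ`. -/
def toOpTensor : A ⊗[k] A →ₗ[k] A ⊗[k] Aᵐᵒᵖ :=
  TensorProduct.map LinearMap.id (MulOpposite.opLinearEquiv k).toLinearMap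

/-- `ρ ↦ ρ₁₂` in `A ⊗ (A ⊗ A)`. -/
def rho12 : A ⊗[k] A →ₐ[k] A ⊗[k] (A ⊗[k] A) :=
  Algebra.TensorProduct.map (AlgHom.id k A) Algebra.TensorProduct.includeLeft

/-- `ρ ↦ ρ₁₃`. -/
def rho13 : A ⊗[k] A →ₐ[k] A ⊗[k] (A ⊗[k] A) :=
  Algebra.TensorProduct.map (AlgHom.id k A) Algebra.TensorProduct.includeRight

/-- `ρ ↦ ρ₂₃`. -/
def rho23 : A ⊗[k] A →ₐ[k] A ⊗[k] (A ⊗[k] A) :=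
  Algebra.TensorProduct.includeRight

/-- The quantum Yang–Baxter equation. -/
def YangBaxter (ρ : A ⊗[k] A) : Prop :=
  rho12 k A ρ * rho13 k A ρ * rho23 k A ρ = rho23 k A ρ * rho13 k A ρ * rho12 k A ρ

/-- An oriented quantum algebra structure `(A, ρ, t_d, t_u)` (with `ρinv` the inverse of `ρ`). -/
structure OrientedQA (ρ ρinv : A ⊗[k] A) (td tu : A →ₗ[k] A) : Prop where
  td_bij : Function.Bijective td
  tu_bij : Function.Bijective tu
  td_one : td 1 = 1
  td_mul : ∀ a b : A, td (a * b) = td a * td b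
  tu_one : tu 1 = 1
  tu_mul : ∀ a b : A, tu (a * b) = tu a * tu b
  comm : ∀ a : A, td (tu a) = tu (td a)
  mul_inv : ρ * ρinv = 1
  inv_mul : ρinv * ρ = 1
  qa1_left : toOpTensor k A (TensorProduct.map LinearMap.id tu ρ) *
      toOpTensor k A (TensorProduct.map td LinearMap.id ρinv) = 1
  qa1_right : toOpTensor k A (TensorProduct.map td LinearMap.id ρinv) *
      toOpTensor k A (TensorProduct.map LinearMap.id tu ρ) = 1
  qa2_d : TensorProduct.map td td ρ = ρ
  qa2_u : TensorProduct.map tu tu ρ = ρ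
  qa3 : YangBaxter k A ρ

/-- Left contraction `(u* ⊗ 1)(ρ)`. -/
def contractL (f : Module.Dual k A) : A ⊗[k] A →ₗ[k] A :=
  (TensorProduct.lid k A).toLinearMap ∘ₗ TensorProduct.map f LinearMap.id

/-- Right contraction `(1 ⊗ v*)(ρ)`. -/
def contractR (g : Module.Dual k A) : A ⊗[k] A →ₗ[k] A :=
  (TensorProduct.rid k A).toLinearMap ∘ₗ TensorProduct.map LinearMap.id g

/-- The set `A_(ρ)` of all `(u* ⊗ 1)(ρ) + (1 ⊗ v*)(ρ)`. -/
def contractSet (ρ : A ⊗[k] A) : Set A :=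
  {x | ∃ f g : Module.Dual k A, x = contractL k A f ρ + contractR k A g ρ}

/-- A quantum algebra `(A, ρ, s)`, with `s` an algebra anti-automorphism. -/
structure QuantumAlgebra (ρ ρinv : A ⊗[k] A) (s : A ≃ₗ[k] A) : Prop where
  s_one : s 1 = 1
  s_anti : ∀ a b : A, s (a * b) = s b * s a
  mul_inv : ρ * ρinv = 1
  inv_mul : ρinv * ρ = 1
  QA1 : ρinv = TensorProduct.map s.toLinearMap LinearMap.id ρ
  QA2 : TensorProduct.map s.toLinearMap s.toLinearMap ρ = ρ
  QA3 : YangBaxter k A ρ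

end

/-!
Pulled back along the algebra isomorphism `1 ⊗ s : A ⊗ A → A ⊗ Aᵒᵖ` (`s` is an
anti-automorphism), the oriented axiom says that `(1 ⊗ s⁻¹ t_u) ρ` is inverse to `(t_d ⊗ s⁻²) ρ`.
So is `(t_d ⊗ s⁻²) ρ⁻¹ = (t_d ⊗ s⁻³) ρ`, hence the two agree. Pairs of linear automorphisms act on
`A ⊗ A` by `(φ, ψ) • x = (φ ⊗ ψ) x`, and `s`, `t_d`, `t_u` lie in the diagonal stabilizer of `ρ`;
in these terms the identity says that `c = (t_u t_d)⁻¹ s⁻²` satisfies `(1 ⊗ c) ρ = ρ = (c ⊗ c) ρ`.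
Then `c` fixes both legs of `ρ`, so it fixes `A_(ρ)` pointwise, and being an algebra automorphism
it is the identity by minimality. Finally `t_u t_d = t_d t_u`.
-/

section PairAction

variable {R A B : Type*} [CommSemiring R] [AddCommMonoid A] [Module R A] [AddCommMonoid B]
  [Module R B]

instance : MulAction ((A ≃ₗ[R] A) × (B ≃ₗ[R] B)) (A ⊗[R] B) where
  smul p x := map (p.1 : A →ₗ[R] A) (p.2 : B →ₗ[R] B) x
  one_smul := DFunLike.congr_fun map_id
  mul_smul _ _ x := (map_map _ _ _ _ x).symm

lemma pair_smul_def (p : (A ≃ₗ[R] A) × (B ≃ₗ[R] B)) (x : A ⊗[R] B) :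
    p • x = map (p.1 : A →ₗ[R] A) (p.2 : B →ₗ[R] B) x :=
  rfl

lemma pair_smul_add (p : (A ≃ₗ[R] A) × (B ≃ₗ[R] B)) (x y : A ⊗[R] B) :
    p • (x + y) = p • x + p • y :=
  map_add _ x y

def diagStabilizer (ρ : A ⊗[R] A) : Subgroup (A ≃ₗ[R] A) :=
  (MulAction.stabilizer _ ρ).comap ((MonoidHom.id _).prod (MonoidHom.id _))

lemma mem_diagStabilizer_iff {ρ : A ⊗[R] A} {φ : A ≃ₗ[R] A} :
    φ ∈ diagStabilizer ρ ↔ (φ, φ) ∈ MulAction.stabilizer _ ρ :=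
  Iff.rfl

end PairAction

lemma algEquiv_pair_smul_mul {R A B : Type*} [CommSemiring R] [Semiring A] [Algebra R A]
    [Semiring B] [Algebra R B] (α : A ≃ₐ[R] A) (β : B ≃ₐ[R] B) (x y : A ⊗[R] B) :
    (α.toLinearEquiv, β.toLinearEquiv) • (x * y) =
      (α.toLinearEquiv, β.toLinearEquiv) • x * (α.toLinearEquiv, β.toLinearEquiv) • y :=
  map_mul (Algebra.TensorProduct.map α.toAlgHom β.toAlgHom) x y

section QuantumAlgebraStructures

variable {k : Type*} [Field k] {A : Type*} [Ring A] [Algebra k A]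

lemma contractL_one_smul (f : Module.Dual k A) (φ : A ≃ₗ[k] A) (x : A ⊗[k] A) :
    contractL k A f (((1 : A ≃ₗ[k] A), φ) • x) = φ (contractL k A f x) := by
  induction x using TensorProduct.induction_on with
  | zero => simp [pair_smul_def]
  | tmul a b => simp [pair_smul_def, contractL]
  | add x y hx hy => rw [pair_smul_add, map_add, map_add, map_add, hx, hy]

lemma contractR_smul_one (g : Module.Dual k A) (φ : A ≃ₗ[k] A) (x : A ⊗[k] A) :
    contractR k A g ((φ, (1 : A ≃ₗ[k] A)) • x) = φ (contractR k A g x) := by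
  induction x using TensorProduct.induction_on with
  | zero => simp [pair_smul_def]
  | tmul a b => simp [pair_smul_def, contractR]
  | add x y hx hy => rw [pair_smul_add, map_add, map_add, map_add, hx, hy]

lemma apply_eq_self_of_mem_contractSet {ρ : A ⊗[k] A} {φ : A ≃ₗ[k] A}
    (hright : ((1 : A ≃ₗ[k] A), φ) ∈ MulAction.stabilizer _ ρ)
    (hdiag : φ ∈ diagStabilizer ρ) {x : A} (hx : x ∈ contractSet k A ρ) :
    φ x = x := by
  have hleft : (φ, (1 : A ≃ₗ[k] A)) ∈ MulAction.stabilizer _ ρ := by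
    simpa using mul_mem (mem_diagStabilizer_iff.mp hdiag) (inv_mem hright)
  obtain ⟨f, g, rfl⟩ := hx
  rw [MulAction.mem_stabilizer_iff] at hright hleft
  rw [map_add, ← contractL_one_smul, ← contractR_smul_one, hright, hleft]

namespace QuantumAlgebra

variable {ρ ρinv : A ⊗[k] A} {s : A ≃ₗ[k] A}

lemma symm_one (h : QuantumAlgebra k A ρ ρinv s) : s.symm 1 = 1 :=
  s.symm_apply_eq.mpr h.s_one.symm

lemma symm_mul (h : QuantumAlgebra k A ρ ρinv s) (a b : A) :
    s.symm (a * b) = s.symm b * s.symm a :=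
  s.injective (by simp [h.s_anti])

def opAlgEquiv (h : QuantumAlgebra k A ρ ρinv s) : A ≃ₐ[k] Aᵐᵒᵖ :=
  AlgEquiv.ofLinearEquiv (s.trans (MulOpposite.opLinearEquiv k)) (by simp [h.s_one])
    (fun a b => by simp [h.s_anti])

@[simp]
lemma opAlgEquiv_apply (h : QuantumAlgebra k A ρ ρinv s) (a : A) :
    h.opAlgEquiv a = MulOpposite.op (s a) :=
  rfl

def symmSq (h : QuantumAlgebra k A ρ ρinv s) : A ≃ₐ[k] A :=
  AlgEquiv.ofLinearEquiv (s⁻¹ * s⁻¹) (by simp [h.symm_one]) (fun a b => by simp [h.symm_mul])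

@[simp]
lemma symmSq_apply (h : QuantumAlgebra k A ρ ρinv s) (a : A) : h.symmSq a = s.symm (s.symm a) :=
  rfl

def tensorOpAlgEquiv (h : QuantumAlgebra k A ρ ρinv s) : A ⊗[k] A ≃ₐ[k] A ⊗[k] Aᵐᵒᵖ :=
  Algebra.TensorProduct.congr AlgEquiv.refl h.opAlgEquiv

lemma mem_diagStabilizer (h : QuantumAlgebra k A ρ ρinv s) : s ∈ diagStabilizer ρ :=
  h.QA2

lemma inv_eq_smul (h : QuantumAlgebra k A ρ ρinv s) :
    ρinv = ((1 : A ≃ₗ[k] A), s⁻¹) • ρ := by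
  have hs : ((1 : A ≃ₗ[k] A), s⁻¹) * (s, s) = (s, 1) := by ext <;> simp
  rw [← mem_diagStabilizer_iff.mp h.mem_diagStabilizer, smul_smul, hs, h.QA1]
  rfl

lemma toOpTensor_eq (h : QuantumAlgebra k A ρ ρinv s) (x : A ⊗[k] A) :
    toOpTensor k A x = h.tensorOpAlgEquiv (((1 : A ≃ₗ[k] A), s⁻¹) • x) := by
  induction x using TensorProduct.induction_on with
  | zero => simp [pair_smul_def]
  | tmul a b => simp [pair_smul_def, toOpTensor, tensorOpAlgEquiv]
  | add x y hx hy => rw [pair_smul_add, map_add, map_add, hx, hy]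

lemma smul_mul_smul_eq_one_of_toOpTensor (h : QuantumAlgebra k A ρ ρinv s) {x y : A ⊗[k] A}
    (hxy : toOpTensor k A x * toOpTensor k A y = 1) :
    ((1 : A ≃ₗ[k] A), s⁻¹) • x * ((1 : A ≃ₗ[k] A), s⁻¹) • y = 1 := by
  apply h.tensorOpAlgEquiv.injective
  rw [map_mul, map_one, ← h.toOpTensor_eq, ← h.toOpTensor_eq, hxy]

lemma one_symm_mul_smul_eq (h : QuantumAlgebra k A ρ ρinv s) (D : A ≃ₐ[k] A) (U : A ≃ₗ[k] A)
    (hDU : toOpTensor k A (((1 : A ≃ₗ[k] A), U) • ρ) *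
      toOpTensor k A ((D.toLinearEquiv, (1 : A ≃ₗ[k] A)) • ρinv) = 1) :
    ((1 : A ≃ₗ[k] A), s⁻¹ * U) • ρ = (D.toLinearEquiv, s⁻¹ * s⁻¹ * s⁻¹) • ρ := by
  -- both sides are inverse to `(D ⊗ s⁻²) ρ`: the left one by `hDU`, the right one as the image
  -- of `ρ⁻¹ = (1 ⊗ s⁻¹) ρ` under the algebra automorphism `D ⊗ s⁻²`
  set Φ := (D.toLinearEquiv, h.symmSq.toLinearEquiv)
  have hΦ : Φ • ρ * Φ • ρinv = 1 := by
    rw [← algEquiv_pair_smul_mul, h.mul_inv]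
    exact map_one (Algebra.TensorProduct.map D.toAlgHom h.symmSq.toAlgHom)
  have hinv : ((1 : A ≃ₗ[k] A), s⁻¹ * U) • ρ * Φ • ρ = 1 := by
    have := h.smul_mul_smul_eq_one_of_toOpTensor hDU
    rwa [h.inv_eq_smul, smul_smul, smul_smul, smul_smul] at this
  rw [left_inv_eq_right_inv hinv hΦ, h.inv_eq_smul, smul_smul]
  rfl

end QuantumAlgebra

namespace OrientedQA

variable {ρ ρinv : A ⊗[k] A} {td tu : A →ₗ[k] A}

noncomputable def down (ht : OrientedQA k A ρ ρinv td tu) : A ≃ₐ[k] A :=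
  AlgEquiv.ofLinearEquiv (LinearEquiv.ofBijective td ht.td_bij) ht.td_one ht.td_mul

noncomputable def up (ht : OrientedQA k A ρ ρinv td tu) : A ≃ₐ[k] A :=
  AlgEquiv.ofLinearEquiv (LinearEquiv.ofBijective tu ht.tu_bij) ht.tu_one ht.tu_mul

@[simp]
lemma down_apply (ht : OrientedQA k A ρ ρinv td tu) (a : A) : ht.down a = td a :=
  rfl

@[simp]
lemma up_apply (ht : OrientedQA k A ρ ρinv td tu) (a : A) : ht.up a = tu a :=
  rfl

lemma down_mem_diagStabilizer (ht : OrientedQA k A ρ ρinv td tu) :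
    ht.down.toLinearEquiv ∈ diagStabilizer ρ :=
  ht.qa2_d

lemma up_mem_diagStabilizer (ht : OrientedQA k A ρ ρinv td tu) :
    ht.up.toLinearEquiv ∈ diagStabilizer ρ :=
  ht.qa2_u

variable {s : A ≃ₗ[k] A}

lemma comp_eqOn_contractSet (h : QuantumAlgebra k A ρ ρinv s)
    (ht : OrientedQA k A ρ ρinv td tu) :
    Set.EqOn (fun x => tu (td x)) (fun x => s.symm (s.symm x)) (contractSet k A ρ) := by
  set D := ht.down.toLinearEquiv
  set U := ht.up.toLinearEquiv
  set c := (U * D)⁻¹ * s⁻¹ * s⁻¹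
  have hright : ((1 : A ≃ₗ[k] A), c) ∈ MulAction.stabilizer _ ρ := by
    have hc : ((1 : A ≃ₗ[k] A), c) =
        (D, D)⁻¹ * ((1 : A ≃ₗ[k] A), s⁻¹ * U)⁻¹ * (D, s⁻¹ * s⁻¹ * s⁻¹) := by
      ext <;> simp [c]
    rw [MulAction.mem_stabilizer_iff, hc, mul_smul, mul_smul,
      ← h.one_symm_mul_smul_eq ht.down U ht.qa1_left, inv_smul_smul]
    exact inv_mem (mem_diagStabilizer_iff.mp ht.down_mem_diagStabilizer)
  have hdiag : c ∈ diagStabilizer ρ :=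
    mul_mem (mul_mem (inv_mem (mul_mem ht.up_mem_diagStabilizer ht.down_mem_diagStabilizer))
      (inv_mem h.mem_diagStabilizer)) (inv_mem h.mem_diagStabilizer)
  intro x hx
  conv_lhs => rw [← apply_eq_self_of_mem_contractSet hright hdiag hx]
  change (U * D * c) x = (s⁻¹ * s⁻¹) x
  simp only [c, mul_assoc, mul_inv_cancel_left]

end OrientedQA

end QuantumAlgebraStructures

open TensorProduct in
/-- if `(A, ρ, s)` is a minimal quantum algebra and `(A, ρ, t_d, t_u)` is
an oriented quantum algebra, then `t_d ∘ t_u = s⁻²`. -/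
theorem comp_eq_antipode_sq_inv {k : Type*} [Field k]
    {A : Type*} [Ring A] [Algebra k A]
    (ρ ρinv : A ⊗[k] A) (s : A ≃ₗ[k] A)
    (h : QuantumAlgebra k A ρ ρinv s)
    (hmin : Algebra.adjoin k (contractSet k A ρ) = ⊤)
    (td tu : A →ₗ[k] A)
    (ht : OrientedQA k A ρ ρinv td tu) :
    td ∘ₗ tu = (s.symm.trans s.symm).toLinearMap := by
  have hcomp : ht.up.toAlgHom.comp ht.down.toAlgHom = h.symmSq.toAlgHom :=
    AlgHom.ext_of_adjoin_eq_top hmin (ht.comp_eqOn_contractSet h)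
  ext x
  simpa [ht.comm] using DFunLike.congr_fun hcomp x
end

section
/- Let (A, ρ) be a minimal quasitriangular Hopf algebra with antipode s over a field k, and let t be a Hopf algebra automorphism of A. Then (A, ρ, t) is a balanced oriented quantum algebra if and only if ρ = (t ⊗ t)(ρ) and t² = s⁻². -/
open TensorProduct

open TensorProduct

noncomputable section

variable (k : Type*) [Field k] (A : Type*) [Ring A] [HopfAlgebra k A]

/-- `(A, ρ)` is a quasitriangular Hopf algebra (with `ρinv` the inverse of `ρ`). -/
structure Quasitriangular (ρ ρinv : A ⊗[k] A) : Prop where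
  mul_inv : ρ * ρinv = 1
  inv_mul : ρinv * ρ = 1
  almost_cocomm : ∀ x : A,
    (TensorProduct.comm k A A) (Coalgebra.comul (R := k) x) * ρ =
      ρ * Coalgebra.comul (R := k) x
  hex1 : (TensorProduct.assoc k A A A)
      (TensorProduct.map (Coalgebra.comul (R := k)) LinearMap.id ρ) =
      rho13 k A ρ * rho23 k A ρ
  hex2 : TensorProduct.map LinearMap.id (Coalgebra.comul (R := k)) ρ =
      rho13 k A ρ * rho12 k A ρ

/-- `t` is a Hopf algebra automorphism of `A`. -/
structure IsHopfAuto (t : A →ₗ[k] A) : Prop where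
  bij : Function.Bijective t
  map_one : t 1 = 1
  map_mul : ∀ a b : A, t (a * b) = t a * t b
  comul_comp : ∀ a : A,
    Coalgebra.comul (R := k) (t a) = TensorProduct.map t t (Coalgebra.comul (R := k) a)
  counit_comp : ∀ a : A, Coalgebra.counit (R := k) (t a) = Coalgebra.counit (R := k) a

end

/-!
Write `w = t ∘ S`. The hexagon axioms give `(ε ⊗ 1)ρ = (1 ⊗ ε)ρ = 1`, `ρ⁻¹ = (S ⊗ 1)ρ` and
`ρ = (1 ⊗ S)ρ⁻¹` (so `(S ⊗ S)ρ = ρ`), and they show that `(1 ⊗ S)ρ` is the inverse of `ρ` in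
`A ⊗ Aᵒᵖ`; the Yang–Baxter equation follows from almost cocommutativity. Applying the algebra map
`1 ⊗ t`, `(1 ⊗ w)ρ` is the inverse of `(1 ⊗ t)ρ` in `A ⊗ Aᵒᵖ`; as `(t ⊗ 1)ρ⁻¹ = (w ⊗ 1)ρ`, the
first balanced axiom says exactly `(w ⊗ 1)ρ = (1 ⊗ w)ρ`. Together with `(t ⊗ t)ρ = ρ` this gives
`(w² ⊗ 1)ρ = (1 ⊗ w²)ρ = (w ⊗ w)ρ = ρ`. Since `t` commutes with `S` (both `t ∘ S` and `S ∘ t` are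
convolution inverses of `t`), `w² = t² S²` is an algebra endomorphism; it fixes every
`(u* ⊗ 1)(ρ)` and `(1 ⊗ v*)(ρ)`, so it is the identity by minimality. Conversely, `t² S² = 1` and
`(t ⊗ t)ρ = ρ` give `(w ⊗ 1)ρ = (t S² t ⊗ S t)ρ = (1 ⊗ w)ρ`.
-/

open Coalgebra HopfAlgebra

theorem BialgHom.toLinearMap_comp_antipode {R A B : Type*} [CommSemiring R]
    [Semiring A] [HopfAlgebra R A] [Semiring B] [HopfAlgebra R B] (f : A →ₐc[R] B) :
    (f : A →ₗ[R] B) ∘ₗ antipode R = antipode R ∘ₗ (f : A →ₗ[R] B) := by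
  apply WithConv.toConv_injective
  refine left_inv_eq_right_inv (a := WithConv.toConv (f : A →ₗ[R] B))
    (WithConv.ofConv_injective ?_) (WithConv.ofConv_injective ?_)
  · have := LinearMap.algHom_comp_convMul_distrib (f : A →ₐ[R] B)
      (WithConv.toConv (antipode R)) (WithConv.toConv .id)
    simp only [LinearMap.antipode_mul_id, LinearMap.algHom_comp_convOne] at this
    exact this.symm
  · have := LinearMap.convMul_comp_coalgHom_distrib (WithConv.toConv (LinearMap.id : B →ₗ[R] B))
      (WithConv.toConv (antipode R)) (f : A →ₗc[R] B)
    simp only [LinearMap.id_mul_antipode, LinearMap.convOne_comp_coalgHom] at this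
    exact this.symm

namespace HopfAlgebra

variable (R A : Type*) [CommSemiring R] [Semiring A] [HopfAlgebra R A]

def antipodeSq : A →ₐ[R] A :=
  .ofLinearMap (antipode R ∘ₗ antipode R) (by simp)
    (fun x y => by simp [antipode_mul_antidistrib])

end HopfAlgebra

namespace Bialgebra

variable {R A : Type*} [CommSemiring R] [Semiring A] [Bialgebra R A]

def counitLeft : A ⊗[R] A →ₐ[R] A :=
  (Algebra.TensorProduct.lid R A).toAlgHom.comp
    (Algebra.TensorProduct.map (counitAlgHom R A) (AlgHom.id R A))

def counitRight : A ⊗[R] A →ₐ[R] A :=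
  (Algebra.TensorProduct.rid R R A).toAlgHom.comp
    (Algebra.TensorProduct.map (AlgHom.id R A) (counitAlgHom R A))

@[simp] lemma counitLeft_tmul (a b : A) : counitLeft (a ⊗ₜ[R] b) = counit (R := R) a • b := by
  simp [counitLeft]

@[simp] lemma counitRight_tmul (a b : A) : counitRight (a ⊗ₜ[R] b) = counit (R := R) b • a := by
  simp [counitRight]

@[simp] lemma counitLeft_comul (a : A) : counitLeft (comul (R := R) a) = a := by
  change _root_.TensorProduct.lid R A (counit.rTensor A (comul a)) = a
  simp

@[simp] lemma counitRight_comul (a : A) : counitRight (comul (R := R) a) = a := by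
  change _root_.TensorProduct.rid R A (counit.lTensor A (comul a)) = a
  simp

end Bialgebra

open Bialgebra

lemma TensorProduct.map_comp_self_of_map_id_eq {R M : Type*} [CommSemiring R] [AddCommMonoid M]
    [Module R M] {w : M →ₗ[R] M} {ρ : M ⊗[R] M} (hw : map w .id ρ = map .id w ρ)
    (hρ : map w w ρ = ρ) : map (w ∘ₗ w) .id ρ = ρ ∧ map .id (w ∘ₗ w) ρ = ρ := by
  constructor
  · calc map (w ∘ₗ w) .id ρ = map w .id (map w .id ρ) := by rw [map_map, LinearMap.id_comp]
      _ = ρ := by rw [hw, map_map, LinearMap.comp_id, LinearMap.id_comp, hρ]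
  · calc map .id (w ∘ₗ w) ρ = map .id w (map .id w ρ) := by rw [map_map, LinearMap.id_comp]
      _ = ρ := by rw [← hw, map_map, LinearMap.comp_id, LinearMap.id_comp, hρ]

section Contraction

variable {k A : Type*} [Field k] [Ring A] [Algebra k A]

@[simp] lemma toOpTensor_tmul (x y : A) :
    toOpTensor k A (x ⊗ₜ y) = x ⊗ₜ MulOpposite.op y := rfl

lemma toOpTensor_one : toOpTensor k A 1 = 1 := rfl

lemma toOpTensor_injective : Function.Injective (toOpTensor k A) :=
  (TensorProduct.congr (LinearEquiv.refl k A) (MulOpposite.opLinearEquiv k)).injective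

lemma map_id_op_toOpTensor (u : A →ₐ[k] A) (z : A ⊗[k] A) :
    Algebra.TensorProduct.map (AlgHom.id k A) (AlgHom.op u) (toOpTensor k A z) =
      toOpTensor k A (map .id u.toLinearMap z) := by
  induction z using TensorProduct.induction_on <;> simp_all

lemma contractL_map_id (f : Module.Dual k A) (u : A →ₗ[k] A) (z : A ⊗[k] A) :
    contractL k A f (map .id u z) = u (contractL k A f z) := by
  induction z using TensorProduct.induction_on <;> simp_all [contractL]

lemma contractR_map_id (g : Module.Dual k A) (u : A →ₗ[k] A) (z : A ⊗[k] A) :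
    contractR k A g (map u .id z) = u (contractR k A g z) := by
  induction z using TensorProduct.induction_on <;> simp_all [contractR]

theorem AlgHom.eq_id_of_map_rho {ρ : A ⊗[k] A} (hmin : Algebra.adjoin k (contractSet k A ρ) = ⊤)
    (φ : A →ₐ[k] A) (hl : map φ.toLinearMap .id ρ = ρ) (hr : map .id φ.toLinearMap ρ = ρ) :
    φ = AlgHom.id k A := by
  refine AlgHom.ext_of_adjoin_eq_top hmin ?_
  rintro _ ⟨f, g, rfl⟩
  have hL := contractL_map_id f φ.toLinearMap ρ
  have hR := contractR_map_id g φ.toLinearMap ρ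
  rw [hr] at hL
  rw [hl] at hR
  simp only [AlgHom.toLinearMap_apply] at hL hR
  simp [← hL, ← hR]

end Contraction

section Legs

variable {k A : Type*} [Field k] [Ring A] [HopfAlgebra k A]

local notation "𝒮" => antipode k (A := A)

lemma map_antipode_mul_comul_id (z : A ⊗[k] A) :
    map (LinearMap.mul' k A ∘ₗ (𝒮).rTensor A) .id (map comul .id z) =
      (1 : A) ⊗ₜ[k] counitLeft z := by
  induction z using TensorProduct.induction_on <;>
    simp_all [Algebra.algebraMap_eq_smul_one, smul_tmul, tmul_add]

lemma map_id_mul_antipode_id_comul (z : A ⊗[k] A) :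
    map .id (LinearMap.mul' k A ∘ₗ (𝒮).lTensor A) (map .id comul z) =
      counitRight z ⊗ₜ[k] (1 : A) := by
  induction z using TensorProduct.induction_on <;>
    simp_all [Algebra.algebraMap_eq_smul_one, smul_tmul', add_tmul]

lemma map_id_antipode_mul_id_comul (z : A ⊗[k] A) :
    map .id (LinearMap.mul' k A ∘ₗ (𝒮).rTensor A) (map .id comul z) =
      counitRight z ⊗ₜ[k] (1 : A) := by
  induction z using TensorProduct.induction_on <;>
    simp_all [Algebra.algebraMap_eq_smul_one, smul_tmul', add_tmul]

lemma map_antipode_mul_rho13_mul_rho23 (x y : A ⊗[k] A) :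
    map (LinearMap.mul' k A ∘ₗ (𝒮).rTensor A) .id
      ((TensorProduct.assoc k A A A).symm (rho13 k A x * rho23 k A y)) = map 𝒮 .id x * y := by
  induction x using TensorProduct.induction_on with
  | zero => simp
  | add x x' hx hx' => simp only [map_add, add_mul, hx, hx']
  | tmul a b =>
    induction y using TensorProduct.induction_on with
    | zero => simp
    | add y y' hy hy' => simp only [map_add, mul_add, hy, hy']
    | tmul c d => simp [rho13, rho23]

lemma map_mul_antipode_rho12_mul_rho13 (x y : A ⊗[k] A) :
    map .id (LinearMap.mul' k A ∘ₗ (𝒮).lTensor A) (rho12 k A x * rho13 k A y) =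
      x * map .id 𝒮 y := by
  induction x using TensorProduct.induction_on with
  | zero => simp
  | add x x' hx hx' => simp only [map_add, add_mul, hx, hx']
  | tmul a b =>
    induction y using TensorProduct.induction_on with
    | zero => simp
    | add y y' hy hy' => simp only [map_add, mul_add, hy, hy']
    | tmul c d => simp [rho12, rho13]

lemma toOpTensor_map_mul_antipode_rho13_mul_rho12 (x y : A ⊗[k] A) :
    toOpTensor k A (map .id (LinearMap.mul' k A ∘ₗ (𝒮).lTensor A) (rho13 k A x * rho12 k A y)) =
      toOpTensor k A (map .id 𝒮 x) * toOpTensor k A y := by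
  induction x using TensorProduct.induction_on with
  | zero => simp
  | add x x' hx hx' => simp only [map_add, add_mul, hx, hx']
  | tmul a b =>
    induction y using TensorProduct.induction_on with
    | zero => simp
    | add y y' hy hy' => simp only [map_add, mul_add, hy, hy']
    | tmul c d => simp [rho12, rho13]

lemma toOpTensor_map_antipode_mul_rho13_mul_rho12 (x y : A ⊗[k] A) :
    toOpTensor k A (map .id (LinearMap.mul' k A ∘ₗ (𝒮).rTensor A) (rho13 k A x * rho12 k A y)) =
      toOpTensor k A x * toOpTensor k A (map .id 𝒮 y) := by
  induction x using TensorProduct.induction_on with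
  | zero => simp
  | add x x' hx hx' => simp only [map_add, add_mul, hx, hx']
  | tmul a b =>
    induction y using TensorProduct.induction_on with
    | zero => simp
    | add y y' hy hy' => simp only [map_add, mul_add, hy, hy']
    | tmul c d => simp [rho12, rho13]

end Legs

namespace Quasitriangular

variable {k A : Type*} [Field k] [Ring A] [HopfAlgebra k A] {ρ ρinv : A ⊗[k] A}

local notation "𝒮" => antipode k (A := A)

theorem isUnit (hQT : Quasitriangular k A ρ ρinv) : IsUnit ρ :=
  ⟨⟨ρ, ρinv, hQT.mul_inv, hQT.inv_mul⟩, rfl⟩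

theorem counitLeft_eq_one (hQT : Quasitriangular k A ρ ρinv) : counitLeft ρ = 1 := by
  let E : A ⊗[k] (A ⊗[k] A) →ₐ[k] A :=
    counitLeft.comp (Algebra.TensorProduct.map (AlgHom.id k A) counitLeft)
  have h13 : ∀ z, E (rho13 k A z) = counitLeft z := fun z => by
    induction z using TensorProduct.induction_on <;> simp_all [E, rho13]
  have h23 : ∀ z, E (rho23 k A z) = counitLeft z := fun z => by
    induction z using TensorProduct.induction_on <;> simp_all [E, rho23]
  have hassoc : ∀ w b, E (TensorProduct.assoc k A A A (w ⊗ₜ b)) =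
      counitLeft (counitLeft w ⊗ₜ[k] b) := fun w b => by
    induction w using TensorProduct.induction_on <;>
      simp_all [E, add_tmul, smul_smul, mul_comm, map_smul]
  have hcomul : ∀ z, E (TensorProduct.assoc k A A A (map comul .id z)) = counitLeft z :=
    fun z => by induction z using TensorProduct.induction_on <;> simp_all
  have hidem : IsIdempotentElem (counitLeft ρ) := by
    have h := congrArg E hQT.hex1
    rwa [hcomul, map_mul, h13, h23, eq_comm] at h
  exact (IsIdempotentElem.iff_eq_one_of_isUnit (hQT.isUnit.map _)).mp hidem

theorem counitRight_eq_one (hQT : Quasitriangular k A ρ ρinv) : counitRight ρ = 1 := by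
  let E : A ⊗[k] (A ⊗[k] A) →ₐ[k] A :=
    counitRight.comp (Algebra.TensorProduct.map (AlgHom.id k A) counitRight)
  have h12 : ∀ z, E (rho12 k A z) = counitRight z := fun z => by
    induction z using TensorProduct.induction_on <;> simp_all [E, rho12]
  have h13 : ∀ z, E (rho13 k A z) = counitRight z := fun z => by
    induction z using TensorProduct.induction_on <;> simp_all [E, rho13]
  have hcomul : ∀ z, E (map .id comul z) = counitRight z := fun z => by
    induction z using TensorProduct.induction_on <;> simp_all [E]
  have hidem : IsIdempotentElem (counitRight ρ) := by
    have h := congrArg E hQT.hex2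
    rwa [hcomul, map_mul, h12, h13, eq_comm] at h
  exact (IsIdempotentElem.iff_eq_one_of_isUnit (hQT.isUnit.map _)).mp hidem

theorem counitRight_inv_eq_one (hQT : Quasitriangular k A ρ ρinv) : counitRight ρinv = 1 := by
  simpa [hQT.counitRight_eq_one] using congrArg counitRight hQT.mul_inv

theorem map_antipode_id (hQT : Quasitriangular k A ρ ρinv) : map 𝒮 .id ρ = ρinv := by
  have h : map 𝒮 .id ρ * ρ = 1 := by
    rw [← map_antipode_mul_rho13_mul_rho23, ← hQT.hex1, LinearEquiv.symm_apply_apply,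
      map_antipode_mul_comul_id, hQT.counitLeft_eq_one, Algebra.TensorProduct.one_def]
  exact left_inv_eq_right_inv h hQT.mul_inv

theorem map_id_comul_inv (hQT : Quasitriangular k A ρ ρinv) :
    map .id comul ρinv = rho12 k A ρinv * rho13 k A ρinv := by
  let D := Algebra.TensorProduct.map (AlgHom.id k A) (comulAlgHom k A)
  have hD : ∀ z, D z = map .id comul z := fun z => rfl
  refine (hD ρinv).symm.trans (left_inv_eq_right_inv (a := D ρ) ?_ ?_)
  · rw [← map_mul, hQT.inv_mul, map_one]
  · rw [hD, hQT.hex2, mul_assoc, ← mul_assoc (rho12 k A ρ), ← map_mul, hQT.mul_inv, map_one,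
      one_mul, ← map_mul, hQT.mul_inv, map_one]

theorem map_id_antipode_inv (hQT : Quasitriangular k A ρ ρinv) : map .id 𝒮 ρinv = ρ := by
  have h : ρinv * map .id 𝒮 ρinv = 1 := by
    rw [← map_mul_antipode_rho12_mul_rho13, ← hQT.map_id_comul_inv,
      map_id_mul_antipode_id_comul, hQT.counitRight_inv_eq_one, Algebra.TensorProduct.one_def]
  exact (left_inv_eq_right_inv hQT.mul_inv h).symm

theorem map_antipode_antipode (hQT : Quasitriangular k A ρ ρinv) : map 𝒮 𝒮 ρ = ρ := by
  calc map 𝒮 𝒮 ρ = map .id 𝒮 (map 𝒮 .id ρ) := by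
        rw [TensorProduct.map_map, LinearMap.id_comp, LinearMap.comp_id]
    _ = ρ := by rw [hQT.map_antipode_id, hQT.map_id_antipode_inv]

theorem toOpTensor_map_id_antipode_mul (hQT : Quasitriangular k A ρ ρinv) :
    toOpTensor k A (map .id 𝒮 ρ) * toOpTensor k A ρ = 1 := by
  rw [← toOpTensor_map_mul_antipode_rho13_mul_rho12, ← hQT.hex2, map_id_mul_antipode_id_comul,
    hQT.counitRight_eq_one, ← Algebra.TensorProduct.one_def, toOpTensor_one]

theorem toOpTensor_mul_map_id_antipode (hQT : Quasitriangular k A ρ ρinv) :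
    toOpTensor k A ρ * toOpTensor k A (map .id 𝒮 ρ) = 1 := by
  rw [← toOpTensor_map_antipode_mul_rho13_mul_rho12, ← hQT.hex2, map_id_antipode_mul_id_comul,
    hQT.counitRight_eq_one, ← Algebra.TensorProduct.one_def, toOpTensor_one]

theorem rho_tmul_one_mul_map_comul_id (hQT : Quasitriangular k A ρ ρinv) (z : A ⊗[k] A) :
    (ρ ⊗ₜ[k] (1 : A)) * map comul .id z =
      map (TensorProduct.comm k A A).toLinearMap .id (map comul .id z) * (ρ ⊗ₜ[k] (1 : A)) := by
  induction z using TensorProduct.induction_on with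
  | zero => simp
  | add x y hx hy => simp only [map_add, mul_add, add_mul, hx, hy]
  | tmul a b => simp [Algebra.TensorProduct.tmul_mul_tmul, hQT.almost_cocomm]

theorem yangBaxter (hQT : Quasitriangular k A ρ ρinv) : YangBaxter k A ρ := by
  let α := Algebra.TensorProduct.assoc k k k A A A
  let σ := α.symm.trans ((Algebra.TensorProduct.congr (Algebra.TensorProduct.comm k A A)
    AlgEquiv.refl).trans α)
  have hσ13 : ∀ z, σ (rho13 k A z) = rho23 k A z := fun z => by
    induction z using TensorProduct.induction_on <;> simp_all [σ, α, rho13, rho23, tmul_add]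
  have hσ23 : ∀ z, σ (rho23 k A z) = rho13 k A z := fun z => by
    induction z using TensorProduct.induction_on <;> simp_all [σ, α, rho13, rho23, tmul_add]
  have hα : ∀ z, α (z ⊗ₜ[k] (1 : A)) = rho12 k A z := fun z => by
    induction z using TensorProduct.induction_on <;> simp_all [α, rho12, add_tmul]
  have hσ : ∀ w, σ (α w) = α (map (TensorProduct.comm k A A).toLinearMap .id w) := fun w => by
    simp only [σ, AlgEquiv.trans_apply, AlgEquiv.symm_apply_apply]
    rfl
  have hex : α (map comul .id ρ) = rho13 k A ρ * rho23 k A ρ := hQT.hex1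
  calc rho12 k A ρ * rho13 k A ρ * rho23 k A ρ
      = α ((ρ ⊗ₜ[k] (1 : A)) * map comul .id ρ) := by rw [mul_assoc, ← hex, map_mul, hα]
    _ = σ (α (map comul .id ρ)) * rho12 k A ρ := by
      rw [hQT.rho_tmul_one_mul_map_comul_id, map_mul, hα, hσ]
    _ = rho23 k A ρ * rho13 k A ρ * rho12 k A ρ := by rw [hex, map_mul, hσ13, hσ23]

end Quasitriangular

namespace IsHopfAuto

variable {k A : Type*} [Field k] [Ring A] [HopfAlgebra k A] {t : A →ₗ[k] A} {ρ ρinv : A ⊗[k] A}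

local notation "𝒮" => antipode k (A := A)

def toAlgHom (ht : IsHopfAuto k A t) : A →ₐ[k] A := .ofLinearMap t ht.map_one ht.map_mul

@[simp] lemma toLinearMap_toAlgHom (ht : IsHopfAuto k A t) : ht.toAlgHom.toLinearMap = t := rfl

def toBialgHom (ht : IsHopfAuto k A t) : A →ₐc[k] A :=
  .ofAlgHom ht.toAlgHom (AlgHom.ext ht.counit_comp) (AlgHom.ext fun a => (ht.comul_comp a).symm)

lemma antipode_comm (ht : IsHopfAuto k A t) : t ∘ₗ 𝒮 = 𝒮 ∘ₗ t :=
  BialgHom.toLinearMap_comp_antipode ht.toBialgHom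

lemma map_antipode (ht : IsHopfAuto k A t) (x : A) : t (𝒮 x) = 𝒮 (t x) :=
  LinearMap.congr_fun ht.antipode_comm x

theorem toOpTensor_mul_eq_one_iff (hQT : Quasitriangular k A ρ ρinv) (ht : IsHopfAuto k A t) :
    (toOpTensor k A (map .id t ρ) * toOpTensor k A (map t .id ρinv) = 1 ∧
      toOpTensor k A (map t .id ρinv) * toOpTensor k A (map .id t ρ) = 1) ↔
      map (t ∘ₗ 𝒮) .id ρ = map .id (t ∘ₗ 𝒮) ρ := by
  set Φ := Algebra.TensorProduct.map (AlgHom.id k A) (AlgHom.op ht.toAlgHom)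
  have hX : Φ (toOpTensor k A ρ) = toOpTensor k A (map .id t ρ) := map_id_op_toOpTensor _ _
  have hZ : Φ (toOpTensor k A (map .id 𝒮 ρ)) = toOpTensor k A (map .id (t ∘ₗ 𝒮) ρ) := by
    rw [map_id_op_toOpTensor, TensorProduct.map_map, LinearMap.id_comp, toLinearMap_toAlgHom]
  have hXZ := congrArg Φ hQT.toOpTensor_mul_map_id_antipode
  have hZX := congrArg Φ hQT.toOpTensor_map_id_antipode_mul
  rw [_root_.map_mul, hX, hZ, _root_.map_one] at hXZ hZX
  rw [← hQT.map_antipode_id, TensorProduct.map_map, LinearMap.id_comp,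
    ← toOpTensor_injective.eq_iff]
  constructor
  · rintro ⟨-, hYX⟩
    exact left_inv_eq_right_inv hYX hXZ
  · intro hYZ
    exact ⟨hYZ ▸ hXZ, hYZ ▸ hZX⟩

theorem sq_antipode_sq_apply (hQT : Quasitriangular k A ρ ρinv)
    (hmin : Algebra.adjoin k (contractSet k A ρ) = ⊤) (ht : IsHopfAuto k A t)
    (hT : map t t ρ = ρ) (hw : map (t ∘ₗ 𝒮) .id ρ = map .id (t ∘ₗ 𝒮) ρ) (x : A) :
    t (t (𝒮 (𝒮 x))) = x := by
  let φ := ht.toAlgHom.comp (ht.toAlgHom.comp (antipodeSq k A))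
  have hφ : φ.toLinearMap = (t ∘ₗ 𝒮) ∘ₗ (t ∘ₗ 𝒮) := by
    ext y
    exact congrArg t (ht.map_antipode (𝒮 y))
  have hww : map (t ∘ₗ 𝒮) (t ∘ₗ 𝒮) ρ = ρ := by
    rw [← TensorProduct.map_map, hQT.map_antipode_antipode, hT]
  obtain ⟨hl, hr⟩ := TensorProduct.map_comp_self_of_map_id_eq hw hww
  rw [← hφ] at hl hr
  exact AlgHom.congr_fun (AlgHom.eq_id_of_map_rho hmin φ hl hr) x

theorem map_comp_antipode_id_eq (hQT : Quasitriangular k A ρ ρinv) (ht : IsHopfAuto k A t)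
    (hT : map t t ρ = ρ) (h : ∀ x, t (t (𝒮 (𝒮 x))) = x) :
    map (t ∘ₗ 𝒮) .id ρ = map .id (t ∘ₗ 𝒮) ρ := by
  have hid : t ∘ₗ 𝒮 ∘ₗ 𝒮 ∘ₗ t = .id := by
    ext x
    simpa only [LinearMap.comp_apply, LinearMap.id_apply, ← ht.map_antipode] using h x
  calc map (t ∘ₗ 𝒮) .id ρ = map (t ∘ₗ 𝒮) .id (map 𝒮 𝒮 (map t t ρ)) := by
        rw [hT, hQT.map_antipode_antipode]
    _ = map (t ∘ₗ 𝒮 ∘ₗ 𝒮 ∘ₗ t) (𝒮 ∘ₗ t) ρ := by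
        simp only [TensorProduct.map_map, LinearMap.comp_assoc, LinearMap.id_comp]
    _ = map .id (t ∘ₗ 𝒮) ρ := by rw [hid, ht.antipode_comm]

end IsHopfAuto

open TensorProduct in
/-- for a minimal quasitriangular Hopf algebra `(A, ρ)` with antipode `s`
and a Hopf algebra automorphism `t` of `A`, `(A, ρ, t)` is a balanced oriented quantum
algebra if and only if `ρ = (t ⊗ t)(ρ)` and `t² = s⁻²`. -/
theorem balanced_iff_sq_eq_antipode_sq_inv {k : Type*} [Field k]
    {A : Type*} [Ring A] [HopfAlgebra k A]
    (ρ ρinv : A ⊗[k] A)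
    (hQT : Quasitriangular k A ρ ρinv)
    (hmin : Algebra.adjoin k (contractSet k A ρ) = ⊤)
    (t : A →ₗ[k] A) (ht : IsHopfAuto k A t) :
    OrientedQA k A ρ ρinv t t ↔
      (TensorProduct.map t t ρ = ρ ∧
        (∀ x : A, t (t (HopfAlgebra.antipode (R := k)
            (HopfAlgebra.antipode (R := k) x))) = x) ∧
        (∀ x : A, HopfAlgebra.antipode (R := k)
            (HopfAlgebra.antipode (R := k) (t (t x))) = x)) := by
  constructor
  · intro hO
    have hw := (ht.toOpTensor_mul_eq_one_iff hQT).mp ⟨hO.qa1_left, hO.qa1_right⟩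
    have h := ht.sq_antipode_sq_apply hQT hmin hO.qa2_d hw
    refine ⟨hO.qa2_d, h, fun x => ?_⟩
    simpa only [← ht.map_antipode] using h x
  · rintro ⟨hT, h, -⟩
    obtain ⟨hl, hr⟩ := (ht.toOpTensor_mul_eq_one_iff hQT).mpr (ht.map_comp_antipode_id_eq hQT hT h)
    exact { td_bij := ht.bij, tu_bij := ht.bij, td_one := ht.map_one, td_mul := ht.map_mul,
            tu_one := ht.map_one, tu_mul := ht.map_mul, comm := fun _ => rfl,
            mul_inv := hQT.mul_inv, inv_mul := hQT.inv_mul, qa1_left := hl, qa1_right := hr,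
            qa2_d := hT, qa2_u := hT, qa3 := hQT.yangBaxter }
end

section
/- Let A be an algebra over k and suppose ρ ∈ A ⊗ A and t_d, t_u are linear automorphisms of A with t_d ⊗ t_d and t_u ⊗ t_u fixing ρ, where ρ is invertible in A ⊗ A. Then ρ⁻¹ is also fixed: ρ⁻¹ = (t_d ⊗ t_d)(ρ⁻¹) = (t_u ⊗ t_u)(ρ⁻¹). Consequently, if (A, ρ, t_d, t_u) is an oriented quantum algebra, then (A, ρ⁻¹, t_d⁻¹, t_u⁻¹) is an oriented quantum algebra over k. -/
open TensorProduct

/-!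
Inverses are unique, so any algebra endomorphism of `A ⊗ A` fixing `ρ` fixes `ρ⁻¹`; this gives the
first claim and the invariance axioms of `(A, ρ⁻¹, t_d⁻¹, t_u⁻¹)`. Its Yang–Baxter equation is the
inverse of that of `ρ`. For the remaining axiom, the algebra automorphism `θ ⊗ 1` of `A ⊗ Aᵐᵒᵖ`,
with `θ = t_u t_d⁻¹`, carries `(t_d ⊗ 1)(ρ⁻¹)` and `(1 ⊗ t_u)(ρ)` to `(1 ⊗ t_u⁻¹)(ρ⁻¹)` and
`(t_d⁻¹ ⊗ 1)(ρ)`, by the `t_u ⊗ t_u`-invariance of `ρ` and `ρ⁻¹`; so it maps the old inverse pair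
in `A ⊗ Aᵐᵒᵖ` to the new one.
-/

theorem map_eq_self_of_mul_eq_one {M F : Type*} [Monoid M] [FunLike F M M] [MonoidHomClass F M M]
    (f : F) {x y : M} (hfx : f x = x) (hxy : x * y = 1) (hyx : y * x = 1) : f y = y :=
  left_inv_eq_right_inv (by rw [← hfx, ← map_mul, hyx, map_one]) hxy

theorem inv_mul_inv_mul_inv_comm {G : Type*} [Group G] {a b c : G} (h : a * b * c = c * b * a) :
    a⁻¹ * b⁻¹ * c⁻¹ = c⁻¹ * b⁻¹ * a⁻¹ := by
  simpa only [mul_inv_rev, mul_assoc] using (congrArg (·⁻¹) h).symm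

namespace TensorProduct

variable {R M N : Type*} [CommSemiring R] [AddCommMonoid M] [AddCommMonoid N]
  [Module R M] [Module R N]

theorem map_symm_eq_self_of_map_eq_self {t : M ≃ₗ[R] M} {s : N ≃ₗ[R] N} {x : M ⊗[R] N}
    (h : map t.toLinearMap s.toLinearMap x = x) :
    map t.symm.toLinearMap s.symm.toLinearMap x = x := by
  conv_lhs => rw [← h]
  rw [map_map, LinearEquiv.symm_comp, LinearEquiv.symm_comp, map_id, LinearMap.id_apply]

theorem map_left_eq_map_symm_right_of_map_eq_self {t : M ≃ₗ[R] M} {s : N ≃ₗ[R] N}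
    {x : M ⊗[R] N} (h : map t.toLinearMap s.toLinearMap x = x) :
    map t.toLinearMap LinearMap.id x = map LinearMap.id s.symm.toLinearMap x := by
  conv_rhs => rw [← h]
  rw [map_map, LinearMap.id_comp, LinearEquiv.symm_comp]

theorem map_id_map_left_eq_of_map_eq_self {t : M ≃ₗ[R] M} {s : N ≃ₗ[R] N} {f g : M →ₗ[R] M}
    {x : M ⊗[R] N} (hfg : f ∘ₗ g = t.toLinearMap) (h : map t.toLinearMap s.toLinearMap x = x) :
    map f LinearMap.id (map g LinearMap.id x) = map LinearMap.id s.symm.toLinearMap x := by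
  rw [map_map, hfg, LinearMap.id_comp, map_left_eq_map_symm_right_of_map_eq_self h]

theorem map_id_map_right_eq_of_map_eq_self {t : M ≃ₗ[R] M} {s : N ≃ₗ[R] N} {f g : M →ₗ[R] M}
    {x : M ⊗[R] N} (hfg : f = g ∘ₗ t.toLinearMap) (h : map t.toLinearMap s.toLinearMap x = x) :
    map f LinearMap.id (map LinearMap.id s.toLinearMap x) = map g LinearMap.id x := by
  conv_rhs => rw [← h]
  rw [map_map, map_map, hfg, LinearMap.id_comp, LinearMap.comp_id]

end TensorProduct

section OrientedQuantumAlgebra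

variable {k A : Type*} [Field k] [Ring A] [Algebra k A]

theorem map_id_toOpTensor (f : A →ₗ[k] A) (x : A ⊗[k] A) :
    TensorProduct.map f LinearMap.id (toOpTensor k A x) =
      toOpTensor k A (TensorProduct.map f LinearMap.id x) := by
  simp only [toOpTensor, TensorProduct.map_map, LinearMap.id_comp, LinearMap.comp_id]

theorem toOpTensor_map_mul_eq_one (θ : A →ₐ[k] A) {x y : A ⊗[k] A}
    (h : toOpTensor k A x * toOpTensor k A y = 1) :
    toOpTensor k A (TensorProduct.map θ.toLinearMap LinearMap.id x) *
      toOpTensor k A (TensorProduct.map θ.toLinearMap LinearMap.id y) = 1 := by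
  have := congrArg (Algebra.TensorProduct.map θ (AlgHom.id k Aᵐᵒᵖ)) h
  rw [map_mul, map_one] at this
  rwa [← map_id_toOpTensor, ← map_id_toOpTensor]

theorem YangBaxter.of_inverse {ρ ρinv : A ⊗[k] A} (hρ : YangBaxter k A ρ)
    (hmi : ρ * ρinv = 1) (him : ρinv * ρ = 1) : YangBaxter k A ρinv := by
  let u : (A ⊗[k] A)ˣ := ⟨ρ, ρinv, hmi, him⟩
  let e (G : A ⊗[k] A →ₐ[k] A ⊗[k] (A ⊗[k] A)) := Units.map (G : A ⊗[k] A →* A ⊗[k] (A ⊗[k] A)) u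
  have hu : e (rho12 k A) * e (rho13 k A) * e (rho23 k A) =
      e (rho23 k A) * e (rho13 k A) * e (rho12 k A) := Units.ext hρ
  exact congrArg Units.val (inv_mul_inv_mul_inv_comm hu)

theorem map_inverse_eq_self (t : A →ₐ[k] A) {ρ ρinv : A ⊗[k] A}
    (hρ : TensorProduct.map t.toLinearMap t.toLinearMap ρ = ρ)
    (hmi : ρ * ρinv = 1) (him : ρinv * ρ = 1) :
    TensorProduct.map t.toLinearMap t.toLinearMap ρinv = ρinv :=
  map_eq_self_of_mul_eq_one (Algebra.TensorProduct.map t t) hρ hmi him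

theorem OrientedQA.inverse {ρ ρinv : A ⊗[k] A} {td tu : A ≃ₗ[k] A}
    (h : OrientedQA k A ρ ρinv td.toLinearMap tu.toLinearMap) :
    OrientedQA k A ρinv ρ td.symm.toLinearMap tu.symm.toLinearMap := by
  let d : A ≃ₐ[k] A := AlgEquiv.ofLinearEquiv td h.td_one h.td_mul
  let u : A ≃ₐ[k] A := AlgEquiv.ofLinearEquiv tu h.tu_one h.tu_mul
  have hcomm : Function.Commute td tu := h.comm
  have hcomm_symm_left : Function.Commute td.symm tu :=
    hcomm.inverse_left td.left_inv td.right_inv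
  have hcomm_symm : Function.Commute td.symm tu.symm :=
    Function.Commute.symm <| hcomm_symm_left.symm.inverse_left tu.left_inv tu.right_inv
  have hd_inv : TensorProduct.map td.toLinearMap td.toLinearMap ρinv = ρinv :=
    map_inverse_eq_self d.toAlgHom h.qa2_d h.mul_inv h.inv_mul
  have hu_inv : TensorProduct.map tu.toLinearMap tu.toLinearMap ρinv = ρinv :=
    map_inverse_eq_self u.toAlgHom h.qa2_u h.mul_inv h.inv_mul
  let θ : A →ₐ[k] A := (u : A →ₐ[k] A).comp (d.symm : A →ₐ[k] A)
  have hθρ : TensorProduct.map θ.toLinearMap LinearMap.id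
      (TensorProduct.map LinearMap.id tu.toLinearMap ρ) =
        TensorProduct.map td.symm.toLinearMap LinearMap.id ρ :=
    TensorProduct.map_id_map_right_eq_of_map_eq_self
      (LinearMap.ext fun a => (hcomm_symm_left a).symm) h.qa2_u
  have hθρinv : TensorProduct.map θ.toLinearMap LinearMap.id
      (TensorProduct.map td.toLinearMap LinearMap.id ρinv) =
        TensorProduct.map LinearMap.id tu.symm.toLinearMap ρinv :=
    TensorProduct.map_id_map_left_eq_of_map_eq_self
      (LinearMap.ext fun a => congrArg tu (td.symm_apply_apply a)) hu_inv
  refine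
    { td_bij := td.symm.bijective
      tu_bij := tu.symm.bijective
      td_one := map_one d.symm
      td_mul := map_mul d.symm
      tu_one := map_one u.symm
      tu_mul := map_mul u.symm
      comm := hcomm_symm
      mul_inv := h.inv_mul
      inv_mul := h.mul_inv
      qa1_left := ?_
      qa1_right := ?_
      qa2_d := TensorProduct.map_symm_eq_self_of_map_eq_self hd_inv
      qa2_u := TensorProduct.map_symm_eq_self_of_map_eq_self hu_inv
      qa3 := h.qa3.of_inverse h.mul_inv h.inv_mul }
  · rw [← hθρ, ← hθρinv]
    exact toOpTensor_map_mul_eq_one θ h.qa1_right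
  · rw [← hθρ, ← hθρinv]
    exact toOpTensor_map_mul_eq_one θ h.qa1_left

end OrientedQuantumAlgebra

open TensorProduct in
/-- if `t_d ⊗ t_d` and `t_u ⊗ t_u` fix the invertible `ρ` (with `t_d, t_u`
algebra automorphisms), then they fix `ρ⁻¹`; consequently if `(A, ρ, t_d, t_u)` is an
oriented quantum algebra, so is `(A, ρ⁻¹, t_d⁻¹, t_u⁻¹)`. -/
theorem inverse_oriented_quantum_algebra {k : Type*} [Field k]
    {A : Type*} [Ring A] [Algebra k A]
    (ρ ρinv : A ⊗[k] A) (td tu : A ≃ₗ[k] A)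
    (htd1 : td 1 = 1) (htdm : ∀ a b : A, td (a * b) = td a * td b)
    (htu1 : tu 1 = 1) (htum : ∀ a b : A, tu (a * b) = tu a * tu b)
    (hmi : ρ * ρinv = 1) (him : ρinv * ρ = 1)
    (h2d : TensorProduct.map td.toLinearMap td.toLinearMap ρ = ρ)
    (h2u : TensorProduct.map tu.toLinearMap tu.toLinearMap ρ = ρ) :
    (TensorProduct.map td.toLinearMap td.toLinearMap ρinv = ρinv ∧
        TensorProduct.map tu.toLinearMap tu.toLinearMap ρinv = ρinv) ∧
      (OrientedQA k A ρ ρinv td.toLinearMap tu.toLinearMap →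
        OrientedQA k A ρinv ρ td.symm.toLinearMap tu.symm.toLinearMap) :=
  ⟨⟨map_inverse_eq_self (AlgEquiv.ofLinearEquiv td htd1 htdm).toAlgHom h2d hmi him,
      map_inverse_eq_self (AlgEquiv.ofLinearEquiv tu htu1 htum).toAlgHom h2u hmi him⟩,
    OrientedQA.inverse⟩
end
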